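/- arXiv:1602.08466 — 6 statements merged into one kernel-verified Lean document; each statement's English description precedes it below -/
import Mathlib

section
/- For each cell i, the load coupling function f_i(ν) = Σ_{j ∈ J_i} r_{ij} / log(1 + p_i g_{ij} / (Σ_{k≠i} p_k g_{kj} ν_k + σ²)) is a concave function of ν on the nonnegative orthant. -/
/-!
Each summand of `f_i` is `r_ij · φ(ℓ_j(ν))` with `φ(t) = 1 / log(1 + c/t)`, `c = p_i g_ij > 0`,
and `ℓ_j(ν) = Σ_{k≠i} p_k g_kj ν_k + σ²` affine and positive on the orthant, so it suffices that `φ`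
is concave on `t > 0`. With `L = log(1 + c/t)` one finds
`φ'' = -c L ((2t + c) L - 2c) / (t (t + c) L²)²`, which is `≤ 0` by `log(1 + x) ≥ 2x / (2 + x)`.
-/

open Real Set

theorem ConcaveOn.finset_sum {𝕜 E β ι : Type*} [Semiring 𝕜] [PartialOrder 𝕜] [AddCommMonoid E]
    [SMul 𝕜 E] [AddCommMonoid β] [PartialOrder β] [IsOrderedAddMonoid β] [Module 𝕜 β]
    {s : Set E} (hs : Convex 𝕜 s) {t : Finset ι} {f : ι → E → β}
    (hf : ∀ i ∈ t, ConcaveOn 𝕜 s (f i)) : ConcaveOn 𝕜 s fun x => ∑ i ∈ t, f i x := by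
  classical
  induction t using Finset.induction_on with
  | empty => simpa using concaveOn_const 0 hs
  | insert i t hi ih =>
    simp only [Finset.sum_insert hi]
    exact (hf i (t.mem_insert_self i)).add (ih fun j hj => hf j (Finset.mem_insert_of_mem hj))

theorem ConcaveOn.comp_finset_sum_mul_add {ι : Type*} {φ : ℝ → ℝ}
    (hφ : ConcaveOn ℝ (Ioi 0) φ) (s : Finset ι) {a : ι → ℝ} (ha : ∀ k ∈ s, 0 ≤ a k) {b : ℝ}
    (hb : 0 < b) : ConcaveOn ℝ (Ici 0) fun ν : ι → ℝ => φ (∑ k ∈ s, a k * ν k + b) := by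
  let A : (ι → ℝ) →ᵃ[ℝ] ℝ :=
    (∑ k ∈ s, a k • LinearMap.proj k).toAffineMap + AffineMap.const ℝ (ι → ℝ) b
  have hA : ∀ ν, A ν = ∑ k ∈ s, a k * ν k + b := fun ν => by simp [A]
  have hA_pos : Ici 0 ⊆ A ⁻¹' Ioi 0 := fun ν hν => by
    rw [mem_preimage, hA, mem_Ioi]
    exact add_pos_of_nonneg_of_pos
      (Finset.sum_nonneg fun k hk => mul_nonneg (ha k hk) (hν k)) hb
  exact ((hφ.comp_affineMap A).subset hA_pos (convex_Ici 0)).congr fun ν _ => by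
    rw [Function.comp_apply, hA]

theorem Real.hasDerivAt_log_one_add_div {c t : ℝ} (hc : 0 ≤ c) (ht : 0 < t) :
    HasDerivAt (fun t => log (1 + c / t)) (-c / (t * (t + c))) t := by
  have hinner : HasDerivAt (fun t => 1 + c / t) (-c / t ^ 2) t := by
    simpa [div_eq_mul_inv] using ((hasDerivAt_inv ht.ne').const_mul c).const_add 1
  convert hinner.log (by positivity) using 1
  field_simp

theorem Real.two_mul_le_mul_log_one_add_div {c t : ℝ} (hc : 0 ≤ c) (ht : 0 < t) :
    2 * c ≤ (2 * t + c) * log (1 + c / t) := by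
  have h := le_log_one_add_of_nonneg (div_nonneg hc ht.le)
  rw [div_le_iff₀ (by positivity)] at h
  calc 2 * c = 2 * (c / t) * t := by field_simp
    _ ≤ log (1 + c / t) * (c / t + 2) * t := by gcongr
    _ = (2 * t + c) * log (1 + c / t) := by field_simp; ring

theorem Real.concaveOn_inv_log_one_add_div {c : ℝ} (hc : 0 < c) :
    ConcaveOn ℝ (Ioi 0) fun t => (log (1 + c / t))⁻¹ := by
  set L : ℝ → ℝ := fun t => log (1 + c / t)
  have hL : ∀ t ∈ Ioi (0 : ℝ), HasDerivAt L (-c / (t * (t + c))) t := fun t ht =>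
    hasDerivAt_log_one_add_div hc.le ht
  have hL_pos : ∀ t ∈ Ioi (0 : ℝ), 0 < L t := fun t ht =>
    log_pos (lt_add_of_pos_right 1 (div_pos hc ht))
  -- `f' = c / q`, and `q' = L ((2t + c) L - 2c) ≥ 0` by `two_mul_le_mul_log_one_add_div`.
  set q : ℝ → ℝ := fun t => t * (t + c) * L t ^ 2
  have hq : ∀ t ∈ Ioi (0 : ℝ), HasDerivAt q (L t * ((2 * t + c) * L t - 2 * c)) t := by
    intro t ht
    have ht' : (0 : ℝ) < t := ht
    have hL2 : HasDerivAt (fun t => L t ^ 2) (2 * L t ^ 1 * (-c / (t * (t + c)))) t :=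
      (hL t ht).pow 2
    refine (((hasDerivAt_id' t).fun_mul ((hasDerivAt_id' t).add_const c)).fun_mul hL2).congr_deriv
      ?_
    field_simp
    ring
  have hq_pos : ∀ t ∈ Ioi (0 : ℝ), 0 < q t := fun t ht => by
    have ht' : (0 : ℝ) < t := ht
    have := hL_pos t ht
    positivity
  refine concaveOn_of_hasDerivWithinAt2_nonpos (convex_Ioi 0) (f' := fun t => c * (q t)⁻¹)
    (f'' := fun t => c * (-(L t * ((2 * t + c) * L t - 2 * c)) / q t ^ 2)) ?_ ?_ ?_ ?_
  · exact fun t ht => ((hL t ht).inv (hL_pos t ht).ne').continuousAt.continuousWithinAt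
  · rw [interior_Ioi]
    intro t ht
    refine ((hL t ht).inv (hL_pos t ht).ne').hasDerivWithinAt.congr_deriv ?_
    have := hL_pos t ht
    have ht' : (0 : ℝ) < t := ht
    simp only [q]
    field_simp
  · rw [interior_Ioi]
    exact fun t ht => (((hq t ht).inv (hq_pos t ht).ne').const_mul c).hasDerivWithinAt
  · rw [interior_Ioi]
    intro t ht
    have hq' : 0 ≤ L t * ((2 * t + c) * L t - 2 * c) :=
      mul_nonneg (hL_pos t ht).le (sub_nonneg.2 (two_mul_le_mul_log_one_add_div hc.le ht))
    exact mul_nonpos_of_nonneg_of_nonpos hc.le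
      (div_nonpos_of_nonpos_of_nonneg (neg_nonpos.2 hq') (sq_nonneg _))

/-- The load coupling function `f_i` is concave in the load vector on the
nonnegative orthant. -/
theorem load_coupling_concave
    (n : ℕ) (U : Type) (i : Fin n) (J : Finset U)
    (r : U → ℝ) (p : Fin n → ℝ) (g : Fin n → U → ℝ) (σ2 : ℝ)
    (hr : ∀ j ∈ J, 0 < r j)
    (hp : ∀ k, 0 < p k)
    (hg : ∀ k j, 0 ≤ g k j)
    (hgi : ∀ j ∈ J, 0 < g i j)
    (hσ : 0 < σ2) :
    ConcaveOn ℝ (Set.Ici (0 : Fin n → ℝ))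
      (fun ν : Fin n → ℝ =>
        ∑ j ∈ J, r j /
          Real.log (1 + p i * g i j /
            (∑ k ∈ Finset.univ.erase i, p k * g k j * ν k + σ2))) := by
  refine ConcaveOn.finset_sum (convex_Ici 0) fun j hj => ?_
  have hφ := concaveOn_inv_log_one_add_div (mul_pos (hp i) (hgi j hj))
  have hφℓ := hφ.comp_finset_sum_mul_add (Finset.univ.erase i)
    (fun k _ => mul_nonneg (hp k).le (hg k j)) hσ
  simpa only [smul_eq_mul, div_eq_mul_inv] using hφℓ.smul (hr j hj).le
end

section
/- Consider a single cell serving one user with demand r > 0, gain g > 0, and fixed interference-plus-noise I > 0, and let p(ν) = (I/g)(e^{r/ν} − 1) be the unique power achieving load ν, i.e., r/log(1 + p(ν) g / I) = ν. Then the transmission energy E(ν) = ν · p(ν) is strictly decreasing in ν on (0, 1]; in particular, if 0 < ν' < ν ≤ 1 then ν'·p(ν') > ν·p(ν). -/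
open Real Set

/- Writing `t = r / ν`, the energy is `(I/g) · r · (e^t - 1)/t`, and the secant slope
`(e^t - 1)/t` of the strictly convex exponential through `0` is strictly increasing in `t`;
since `t` decreases as `ν` grows, the energy strictly decreases. -/

lemma strictMonoOn_exp_sub_one_div : StrictMonoOn (fun t : ℝ => (exp t - 1) / t) (Ioi 0) := by
  intro s hs t ht hst
  simpa using strictConvexOn_exp.secant_strict_mono (mem_univ 0) (mem_univ s) (mem_univ t)
    (ne_of_gt hs) (ne_of_gt ht) hst

lemma strictAntiOn_mul_exp_div_sub_one {r : ℝ} (hr : 0 < r) :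
    StrictAntiOn (fun ν : ℝ => ν * (exp (r / ν) - 1)) (Ioi 0) := by
  intro ν' hν' ν hν hνν
  have hν'0 : ν' ≠ 0 := ne_of_gt hν'
  have hν0 : ν ≠ 0 := ne_of_gt hν
  have hslope := strictMonoOn_exp_sub_one_div (div_pos hr hν) (div_pos hr hν')
    (div_lt_div_of_pos_left hr hν' hνν)
  have hrewrite : ∀ x : ℝ, x ≠ 0 → x * (exp (r / x) - 1) = r * ((exp (r / x) - 1) / (r / x)) := by
    intro x hx
    field_simp
  simp only [hrewrite ν hν0, hrewrite ν' hν'0]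
  exact mul_lt_mul_of_pos_left hslope hr

theorem energy_strictly_decreasing_single_user_general
    (r g I : ℝ) (hr : 0 < r) (hg : 0 < g) (hI : 0 < I)
    (ν ν' : ℝ) (hν' : 0 < ν') (hνν : ν' < ν) :
    ν * (I / g * (Real.exp (r / ν) - 1)) <
      ν' * (I / g * (Real.exp (r / ν') - 1)) := by
  have hanti := strictAntiOn_mul_exp_div_sub_one hr hν' (hν'.trans hνν) hνν
  calc ν * (I / g * (exp (r / ν) - 1))
      = I / g * (ν * (exp (r / ν) - 1)) := by ring
    _ < I / g * (ν' * (exp (r / ν') - 1)) := mul_lt_mul_of_pos_left hanti (div_pos hI hg)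
    _ = ν' * (I / g * (exp (r / ν') - 1)) := by ring

/-- For a single cell serving one user, with `p(ν) = (I/g)(e^{r/ν} − 1)` the unique
power achieving load `ν`, the transmission energy `E(ν) = ν · p(ν)` is strictly
decreasing on `(0,1]`. -/
theorem energy_strictly_decreasing_single_user
    (r g I : ℝ) (hr : 0 < r) (hg : 0 < g) (hI : 0 < I)
    (hload : ∀ ν : ℝ, 0 < ν →
      r / Real.log (1 + (I / g * (Real.exp (r / ν) - 1)) * g / I) = ν)
    (ν ν' : ℝ) (hν' : 0 < ν') (hνν : ν' < ν) (hν1 : ν ≤ 1) :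
    ν * (I / g * (Real.exp (r / ν) - 1)) <
      ν' * (I / g * (Real.exp (r / ν') - 1)) :=
  energy_strictly_decreasing_single_user_general r g I hr hg hI ν ν' hν' hνν
end

section
/- Let J be a nonempty finite set with demands r_j > 0, gains g_j > 0, and fixed interference-plus-noise I_j > 0, and for ν > 0 let p(ν) be the unique power with Σ_{j∈J} r_j/log(1 + p(ν) g_j/I_j) = ν. Then the energy function E(ν) = ν · p(ν) is strictly decreasing on (0, ∞): if 0 < ν' < ν then ν'·p(ν') > ν·p(ν). -/
/-!
Put `c_j = g_j / I_j`. Each `log (1 + p c_j)` increases with `p`, so `ν ↦ p(ν)` is decreasing and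
`ν' < ν` forces `p < p'`. Writing `ν p = ∑_j r_j · p / log (1 + p c_j)`, it remains to see that
`x ↦ x / log (1 + x c)` is strictly increasing; with `t = 1 + x c` this says that the secant slope
`log t / (t - 1)` of the strictly concave `log` through `1` strictly decreases in `t`.
-/

open Finset Real Set

lemma strictAntiOn_log_div_sub_one : StrictAntiOn (fun t : ℝ => log t / (t - 1)) (Ioi 1) := by
  intro s hs t ht hst
  have key := strictConcaveOn_log_Ioi.secant_strict_mono (a := 1) (mem_Ioi.2 one_pos)
    (mem_Ioi.2 (one_pos.trans hs)) (mem_Ioi.2 (one_pos.trans ht)) (ne_of_gt hs) (ne_of_gt ht) hst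
  simpa only [log_one, sub_zero] using key

lemma strictMonoOn_div_log_one_add_mul {c : ℝ} (hc : 0 < c) :
    StrictMonoOn (fun x : ℝ => x / log (1 + x * c)) (Ioi 0) := by
  intro x hx y hy hxy
  have hxc : 0 < x * c := mul_pos hx hc
  have hyc : 0 < y * c := mul_pos hy hc
  have hslope : log (1 + y * c) / (y * c) < log (1 + x * c) / (x * c) := by
    simpa only [add_sub_cancel_left] using strictAntiOn_log_div_sub_one
      (lt_add_of_pos_right 1 hxc) (lt_add_of_pos_right 1 hyc) (by gcongr)
  have hLx : 0 < log (1 + x * c) := log_pos (lt_add_of_pos_right 1 hxc)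
  have hLy : 0 < log (1 + y * c) := log_pos (lt_add_of_pos_right 1 hyc)
  rw [div_lt_div_iff₀ hyc hxc] at hslope
  rw [div_lt_div_iff₀ hLx hLy]
  nlinarith

section SumDivLog

variable {ι : Type*} {s : Finset ι} {r c : ι → ℝ}

lemma strictAntiOn_sum_div_log_one_add_mul (hs : s.Nonempty) (hr : ∀ j ∈ s, 0 < r j)
    (hc : ∀ j ∈ s, 0 < c j) :
    StrictAntiOn (fun x : ℝ => ∑ j ∈ s, r j / log (1 + x * c j)) (Ioi 0) := by
  intro x hx y _ hxy
  refine sum_lt_sum_of_nonempty hs fun j hj => ?_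
  have hxc : 0 < x * c j := mul_pos hx (hc j hj)
  exact div_lt_div_of_pos_left (hr j hj) (log_pos (lt_add_of_pos_right 1 hxc))
    (log_lt_log (by linarith) (by gcongr; exact hc j hj))

lemma strictMonoOn_sum_div_log_one_add_mul_mul_self (hs : s.Nonempty) (hr : ∀ j ∈ s, 0 < r j)
    (hc : ∀ j ∈ s, 0 < c j) :
    StrictMonoOn (fun x : ℝ => (∑ j ∈ s, r j / log (1 + x * c j)) * x) (Ioi 0) := by
  intro x hx y hy hxy
  simp only [sum_mul, div_mul_eq_mul_div, mul_div_assoc]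
  exact sum_lt_sum_of_nonempty hs fun j hj =>
    mul_lt_mul_of_pos_left (strictMonoOn_div_log_one_add_mul (hc j hj) hx hy hxy) (hr j hj)

end SumDivLog

theorem energy_strictly_decreasing_multiuser_general
    (U : Type) (J : Finset U) (r g I : U → ℝ)
    (hJ : J.Nonempty)
    (hr : ∀ j ∈ J, 0 < r j)
    (hg : ∀ j ∈ J, 0 < g j)
    (hI : ∀ j ∈ J, 0 < I j)
    (ν ν' p p' : ℝ)
    (hνν : ν' < ν)
    (hp : 0 < p) (hp' : 0 < p')
    (heq : (∑ j ∈ J, r j / Real.log (1 + p * g j / I j)) = ν)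
    (heq' : (∑ j ∈ J, r j / Real.log (1 + p' * g j / I j)) = ν') :
    ν * p < ν' * p' := by
  have hc : ∀ j ∈ J, 0 < g j / I j := fun j hj => div_pos (hg j hj) (hI j hj)
  simp only [mul_div_assoc] at heq heq'
  have hpp' : p < p' :=
    ((strictAntiOn_sum_div_log_one_add_mul hJ hr hc).lt_iff_gt hp' hp).1
      (by rwa [heq, heq'])
  rw [← heq, ← heq']
  exact strictMonoOn_sum_div_log_one_add_mul_mul_self hJ hr hc hp hp' hpp'

/-- The energy `E(ν) = ν · p(ν)` is strictly decreasing on `(0, ∞)`, where `p(ν)`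
is the unique power with `∑_j r_j / log(1 + p(ν) g_j / I_j) = ν`. -/
theorem energy_strictly_decreasing_multiuser
    (U : Type) (J : Finset U) (r g I : U → ℝ)
    (hJ : J.Nonempty)
    (hr : ∀ j ∈ J, 0 < r j)
    (hg : ∀ j ∈ J, 0 < g j)
    (hI : ∀ j ∈ J, 0 < I j)
    (ν ν' p p' : ℝ)
    (hν' : 0 < ν') (hνν : ν' < ν)
    (hp : 0 < p) (hp' : 0 < p')
    (heq : (∑ j ∈ J, r j / Real.log (1 + p * g j / I j)) = ν)
    (heq' : (∑ j ∈ J, r j / Real.log (1 + p' * g j / I j)) = ν') :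
    ν * p < ν' * p' :=
  energy_strictly_decreasing_multiuser_general U J r g I hJ hr hg hI ν ν' p p' hνν hp hp' heq heq'
end

section
/- A standard interference function T: ℝⁿ_{>0} → ℝⁿ_{>0} (positive, monotone, scalable) has at most one fixed point: if T(p) = p and T(q) = q with p, q > 0 componentwise, then p = q. -/
/-!
If `q ≰ p`, let `α = q j / p j` be the largest ratio `q i / p i`; then `α > 1` and `q ≤ α • p` with
equality at `j`. Monotonicity and scalability give
`q j = T q j ≤ T (α • p) j < α * T p j = α * p j = q j`, a contradiction. Hence `q ≤ p`, and by
symmetry `p = q`.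
-/

open Function

theorem le_of_isFixedPt_of_monotone_of_scalable {ι : Type*} [Finite ι]
    {T : (ι → ℝ) → ι → ℝ}
    (hmono : ∀ p q : ι → ℝ, (∀ i, 0 < p i) → (∀ i, 0 < q i) → p ≤ q → T p ≤ T q)
    (hscal : ∀ α : ℝ, 1 < α → ∀ p : ι → ℝ, (∀ i, 0 < p i) → ∀ i, T (α • p) i < α * T p i)
    {p q : ι → ℝ} (hp : ∀ i, 0 < p i) (hq : ∀ i, 0 < q i)
    (hfp : IsFixedPt T p) (hfq : IsFixedPt T q) :
    q ≤ p := by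
  by_contra hqp
  obtain ⟨k, hk⟩ : ∃ k, p k < q k := by simpa [Pi.le_def] using hqp
  have : Nonempty ι := ⟨k⟩
  obtain ⟨j, hj⟩ := Finite.exists_max fun i => q i / p i
  set α := q j / p j
  have hα : 1 < α := ((one_lt_div (hp k)).2 hk).trans_le (hj k)
  have hq_le : q ≤ α • p := fun i => (div_le_iff₀ (hp i)).1 (hj i)
  have hαp : ∀ i, 0 < (α • p) i := fun i => mul_pos (zero_lt_one.trans hα) (hp i)
  have : q j < q j :=
    calc q j = T q j := by rw [hfq]
      _ ≤ T (α • p) j := hmono _ _ hq hαp hq_le j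
      _ < α * T p j := hscal α hα p hp j
      _ = q j := by rw [hfp]; exact div_mul_cancel₀ _ (hp j).ne'
  exact lt_irrefl _ this

theorem standard_interference_unique_fixed_point_general
    (n : ℕ) (T : (Fin n → ℝ) → (Fin n → ℝ))
    (hmono : ∀ p q : Fin n → ℝ, (∀ i, 0 < p i) → (∀ i, 0 < q i) →
      p ≤ q → T p ≤ T q)
    (hscal : ∀ α : ℝ, 1 < α → ∀ p : Fin n → ℝ, (∀ i, 0 < p i) →
      ∀ i, T (α • p) i < α * T p i)
    (p q : Fin n → ℝ)
    (hp : ∀ i, 0 < p i) (hq : ∀ i, 0 < q i)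
    (hfp : T p = p) (hfq : T q = q) :
    p = q :=
  le_antisymm (le_of_isFixedPt_of_monotone_of_scalable hmono hscal hq hp hfq hfp)
    (le_of_isFixedPt_of_monotone_of_scalable hmono hscal hp hq hfp hfq)

/-- A standard interference function (positive, monotone, scalable) has at most
one fixed point in the strictly positive orthant. -/
theorem standard_interference_unique_fixed_point
    (n : ℕ) (T : (Fin n → ℝ) → (Fin n → ℝ))
    (hpos : ∀ p : Fin n → ℝ, (∀ i, 0 < p i) → ∀ i, 0 < T p i)
    (hmono : ∀ p q : Fin n → ℝ, (∀ i, 0 < p i) → (∀ i, 0 < q i) →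
      p ≤ q → T p ≤ T q)
    (hscal : ∀ α : ℝ, 1 < α → ∀ p : Fin n → ℝ, (∀ i, 0 < p i) →
      ∀ i, T (α • p) i < α * T p i)
    (p q : Fin n → ℝ)
    (hp : ∀ i, 0 < p i) (hq : ∀ i, 0 < q i)
    (hfp : T p = p) (hfq : T q = q) :
    p = q :=
  standard_interference_unique_fixed_point_general n T hmono hscal p q hp hq hfp hfq
end

section
/- Consider a graph G = (V, E) with |V| = n ≥ 2, and a set S ⊆ V of activated LPNs such that each activated LPN i interferes with the users of its graph neighbors. If for some i ∈ S a neighbor of i is also in S, streaming with LPN power 1, serving gain 1 and demand 1 at full load requires SINR satisfying 1 = 1/log₂(1 + 1/(I + 1)) with interference I ≥ ε > 0, which forces the required LPN power to exceed the unit power limit; hence any feasible set S of simultaneously activated LPNs (each within its unit power budget and achieving its unit demand at full load) must be an independent set in G. -/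
/-! At full load the rate equation forces `log₂ (1 + SINR) = 1`, i.e. `SINR = 1`, so the power an
LPN needs equals its interference plus noise. An activated neighbour contributes interference
`ε > 0`, pushing that power above the unit budget. -/

theorem eq_add_one_of_one_eq_one_div_logb {p I : ℝ} (hp : 0 < p) (hI : 0 ≤ I)
    (hrate : (1 : ℝ) = 1 / Real.logb 2 (1 + p * 1 / (I + 1))) : p = I + 1 := by
  have hlog : Real.logb 2 (1 + p * 1 / (I + 1)) = 1 :=
    inv_eq_one.mp (by rw [← one_div]; exact hrate.symm)
  have hsinr : (2 : ℝ) ^ (1 : ℝ) = 1 + p * 1 / (I + 1) :=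
    (Real.logb_eq_iff_rpow_eq (by norm_num) (by norm_num) (by positivity)).mp hlog
  rw [Real.rpow_one] at hsinr
  field_simp at hsinr
  linarith

theorem SimpleGraph.one_le_card_neighborFinset_inter {V : Type*} [DecidableEq V]
    (G : SimpleGraph V) {i j : V} [Fintype (G.neighborSet i)] {s : Finset V}
    (hadj : G.Adj i j) (hj : j ∈ s) : 1 ≤ (G.neighborFinset i ∩ s).card :=
  Finset.card_pos.mpr ⟨j, Finset.mem_inter.mpr ⟨(G.mem_neighborFinset i j).mpr hadj, hj⟩⟩

theorem feasible_lpns_independent_general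
    (n : ℕ)
    (G : SimpleGraph (Fin n)) [DecidableRel G.Adj]
    (ε : ℝ) (hε : 0 < ε)
    (S : Finset (Fin n)) (p : Fin n → ℝ)
    (hfeas : ∀ i ∈ S, 0 < p i ∧ p i ≤ 1 ∧
      (1 : ℝ) = 1 / Real.logb 2
        (1 + p i * 1 / ((((G.neighborFinset i ∩ S).card : ℝ)) * ε + 1))) :
    ∀ i ∈ S, ∀ j ∈ S, ¬ G.Adj i j := by
  intro i hi j hj hadj
  obtain ⟨hp_pos, hp_le_one, hrate⟩ := hfeas i hi
  have hm : (1 : ℝ) ≤ (G.neighborFinset i ∩ S).card :=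
    Nat.one_le_cast.mpr (G.one_le_card_neighborFinset_inter hadj hj)
  have hp := eq_add_one_of_one_eq_one_div_logb hp_pos (mul_nonneg (Nat.cast_nonneg _) hε.le) hrate
  nlinarith

/-- In the NP-hardness reduction, any feasible set of simultaneously activated
LPNs (each within its unit power budget and meeting its unit demand at full load,
where each activated neighbor contributes interference `ε`) must be an independent
set of the graph. -/
theorem feasible_lpns_independent
    (n : ℕ) (hn : 2 ≤ n)
    (G : SimpleGraph (Fin n)) [DecidableRel G.Adj]
    (ε : ℝ) (hε : 0 < ε)
    (S : Finset (Fin n)) (p : Fin n → ℝ)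
    (hfeas : ∀ i ∈ S, 0 < p i ∧ p i ≤ 1 ∧
      (1 : ℝ) = 1 / Real.logb 2
        (1 + p i * 1 / ((((G.neighborFinset i ∩ S).card : ℝ)) * ε + 1))) :
    ∀ i ∈ S, ∀ j ∈ S, ¬ G.Adj i j :=
  feasible_lpns_independent_general n G ε hε S p hfeas
end

section
/- Let f(ν) be defined componentwise by f_i(ν) = Σ_{j∈J_i} r_{ij}/log(1 + p_i g_{ij}/(Σ_{k≠i} p_k g_{kj} ν_k + σ²)) for fixed p > 0, r > 0, gains g ≥ 0 with g_{ij} > 0 for served users, and σ² > 0. If there exists ν̂ with 0 < ν̂ ≤ 1 and f(ν̂) ≤ ν̂ componentwise, then the iteration ν^{t+1} = f(ν^t) starting from ν⁰ = ν̂ converges monotonically (componentwise nonincreasing) to a fixed point ν* with f(ν*) = ν* and 0 < ν* ≤ ν̂. -/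
/-!
On the nonnegative orthant the load coupling map `F` is continuous, strictly positive, and
monotone, because raising any load raises the interference and so lowers every SINR. Hence
from a point with `F ν̂ ≤ ν̂` the iterates decrease and stay nonnegative; being bounded below,
they converge to their infimum, which is a fixed point by continuity and positive because `F`
is.
-/

open Filter Function Set Topology

section MonotoneIteration

variable {α : Type*} {f : α → α} {s : Set α} {x : α}

theorem MonotoneOn.antitone_iterate_of_map_le [Preorder α] (hf : MonotoneOn f s)
    (hmaps : MapsTo f s s) (hx : x ∈ s) (hfx : f x ≤ x) : Antitone fun t => f^[t] x := by
  refine antitone_nat_of_succ_le fun t => ?_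
  induction t with
  | zero => exact hfx
  | succ t ih =>
    have := hf (hmaps.iterate (t + 1) hx) (hmaps.iterate t hx) ih
    rwa [← iterate_succ_apply' f (t + 1), ← iterate_succ_apply' f t] at this

theorem MonotoneOn.exists_isFixedPt_tendsto_iterate_of_map_le [ConditionallyCompleteLattice α]
    [TopologicalSpace α] [InfConvergenceClass α] [T2Space α] (hf : MonotoneOn f s)
    (hmaps : MapsTo f s s) (hs : IsClosed s) (hbdd : BddBelow s)
    (hcont : ∀ y ∈ s, ContinuousAt f y) (hx : x ∈ s) (hfx : f x ≤ x) :
    ∃ y ∈ s, IsFixedPt f y ∧ y ≤ x ∧ Tendsto (fun t => f^[t] x) atTop (𝓝 y) := by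
  have hanti := hf.antitone_iterate_of_map_le hmaps hx hfx
  have hrange : BddBelow (range fun t => f^[t] x) :=
    hbdd.mono (range_subset_iff.2 fun t => hmaps.iterate t hx)
  have hlim := tendsto_atTop_ciInf hanti hrange
  have hmem : (⨅ t, f^[t] x) ∈ s :=
    hs.mem_of_tendsto hlim (Eventually.of_forall fun t => hmaps.iterate t hx)
  exact ⟨_, hmem, isFixedPt_of_tendsto_iterate hlim (hcont _ hmem), ciInf_le hrange 0, hlim⟩

end MonotoneIteration

section LoadCoupling

variable {ι U : Type*} [Fintype ι] [DecidableEq ι]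

/-- Signal-to-interference-plus-noise ratio of user `j` served by cell `i` under loads `ν`. -/
noncomputable def sinr (p : ι → ℝ) (g : ι → U → ℝ) (σ2 : ℝ) (ν : ι → ℝ) (i : ι) (j : U) : ℝ :=
  p i * g i j / (∑ k ∈ Finset.univ.erase i, p k * g k j * ν k + σ2)

noncomputable def loadMap (J : ι → Finset U) (r : ι → U → ℝ) (p : ι → ℝ) (g : ι → U → ℝ)
    (σ2 : ℝ) (ν : ι → ℝ) (i : ι) : ℝ :=
  ∑ j ∈ J i, r i j / Real.log (1 + sinr p g σ2 ν i j)

variable {J : ι → Finset U} {r : ι → U → ℝ} {p : ι → ℝ} {g : ι → U → ℝ} {σ2 : ℝ}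
  {ν ν' : ι → ℝ} {i : ι} {j : U}

theorem interference_add_noise_pos (hp : ∀ k, 0 < p k) (hg : ∀ k j, 0 ≤ g k j) (hσ : 0 < σ2)
    (hν : 0 ≤ ν) : 0 < ∑ k ∈ Finset.univ.erase i, p k * g k j * ν k + σ2 := by
  have : 0 ≤ ∑ k ∈ Finset.univ.erase i, p k * g k j * ν k :=
    Finset.sum_nonneg fun k _ => mul_nonneg (mul_nonneg (hp k).le (hg k j)) (hν k)
  linarith

theorem sinr_pos (hp : ∀ k, 0 < p k) (hg : ∀ k j, 0 ≤ g k j) (hσ : 0 < σ2) (hν : 0 ≤ ν)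
    (hgij : 0 < g i j) : 0 < sinr p g σ2 ν i j :=
  div_pos (mul_pos (hp i) hgij) (interference_add_noise_pos hp hg hσ hν)

theorem sinr_anti (hp : ∀ k, 0 < p k) (hg : ∀ k j, 0 ≤ g k j) (hσ : 0 < σ2) (hν : 0 ≤ ν)
    (hle : ν ≤ ν') : sinr p g σ2 ν' i j ≤ sinr p g σ2 ν i j := by
  unfold sinr
  gcongr
  · exact mul_nonneg (hp i).le (hg i j)
  · exact interference_add_noise_pos hp hg hσ hν
  · exact mul_nonneg (hp _).le (hg _ j)
  · exact hle _

theorem continuousAt_sinr (hp : ∀ k, 0 < p k) (hg : ∀ k j, 0 ≤ g k j) (hσ : 0 < σ2)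
    (hν : 0 ≤ ν) : ContinuousAt (fun ν => sinr p g σ2 ν i j) ν := by
  have hden : Continuous fun ν : ι → ℝ => ∑ k ∈ Finset.univ.erase i, p k * g k j * ν k + σ2 :=
    (continuous_finsetSum _ fun k _ => by fun_prop).add continuous_const
  exact continuousAt_const.div hden.continuousAt (interference_add_noise_pos hp hg hσ hν).ne'

theorem log_one_add_sinr_pos (hp : ∀ k, 0 < p k) (hg : ∀ k j, 0 ≤ g k j) (hσ : 0 < σ2)
    (hν : 0 ≤ ν) (hgij : 0 < g i j) : 0 < Real.log (1 + sinr p g σ2 ν i j) :=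
  Real.log_pos (by linarith [sinr_pos hp hg hσ hν hgij])

theorem loadMap_pos (hJ : ∀ i, (J i).Nonempty) (hr : ∀ i, ∀ j ∈ J i, 0 < r i j)
    (hp : ∀ k, 0 < p k) (hg : ∀ k j, 0 ≤ g k j) (hgi : ∀ i, ∀ j ∈ J i, 0 < g i j)
    (hσ : 0 < σ2) (hν : 0 ≤ ν) : 0 < loadMap J r p g σ2 ν i :=
  Finset.sum_pos (fun j hj => div_pos (hr i j hj) (log_one_add_sinr_pos hp hg hσ hν (hgi i j hj)))
    (hJ i)

theorem loadMap_monotoneOn (hr : ∀ i, ∀ j ∈ J i, 0 < r i j) (hp : ∀ k, 0 < p k)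
    (hg : ∀ k j, 0 ≤ g k j) (hgi : ∀ i, ∀ j ∈ J i, 0 < g i j) (hσ : 0 < σ2) :
    MonotoneOn (loadMap J r p g σ2) (Ici 0) := by
  intro ν hν ν' hν' hle i
  refine Finset.sum_le_sum fun j hj => ?_
  refine div_le_div_of_nonneg_left (hr i j hj).le
    (log_one_add_sinr_pos hp hg hσ hν' (hgi i j hj)) ?_
  gcongr
  · linarith [sinr_pos hp hg hσ hν' (hgi i j hj)]
  · exact sinr_anti hp hg hσ hν hle

theorem continuousAt_loadMap (hp : ∀ k, 0 < p k) (hg : ∀ k j, 0 ≤ g k j)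
    (hgi : ∀ i, ∀ j ∈ J i, 0 < g i j) (hσ : 0 < σ2) (hν : 0 ≤ ν) :
    ContinuousAt (loadMap J r p g σ2) ν := by
  refine continuousAt_pi.2 fun i => tendsto_finsetSum _ fun j hj => ?_
  have hsinr := continuousAt_sinr (i := i) (j := j) hp hg hσ hν
  have hlog_arg : 0 < 1 + sinr p g σ2 ν i j := by linarith [sinr_pos hp hg hσ hν (hgi i j hj)]
  exact continuousAt_const.div ((continuousAt_const.add hsinr).log hlog_arg.ne')
    (log_one_add_sinr_pos hp hg hσ hν (hgi i j hj)).ne'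

end LoadCoupling

/-- Monotone iteration for the load coupling map: if `F(ν̂) ≤ ν̂` for some
`0 < ν̂ ≤ 1`, then iterating `F` from `ν̂` yields a componentwise nonincreasing
sequence converging to a fixed point `ν* ≤ ν̂` with `ν* > 0`. -/
theorem load_coupling_iteration_converges
    (n : ℕ) (U : Type) (J : Fin n → Finset U)
    (r : Fin n → U → ℝ) (p : Fin n → ℝ) (g : Fin n → U → ℝ) (σ2 : ℝ)
    (hJ : ∀ i, (J i).Nonempty)
    (hr : ∀ i, ∀ j ∈ J i, 0 < r i j)
    (hp : ∀ k, 0 < p k)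
    (hg : ∀ k j, 0 ≤ g k j)
    (hgi : ∀ i, ∀ j ∈ J i, 0 < g i j)
    (hσ : 0 < σ2)
    (F : (Fin n → ℝ) → (Fin n → ℝ))
    (hF : ∀ ν : Fin n → ℝ, ∀ i : Fin n,
      F ν i = ∑ j ∈ J i, r i j /
        Real.log (1 + p i * g i j /
          (∑ k ∈ Finset.univ.erase i, p k * g k j * ν k + σ2)))
    (νhat : Fin n → ℝ)
    (hνhat : ∀ i, 0 < νhat i ∧ νhat i ≤ 1)
    (hfeas : F νhat ≤ νhat) :
    (∀ t : ℕ, F^[t + 1] νhat ≤ F^[t] νhat) ∧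
    ∃ νstar : Fin n → ℝ, F νstar = νstar ∧ (∀ i, 0 < νstar i) ∧ νstar ≤ νhat ∧
      Tendsto (fun t : ℕ => F^[t] νhat) atTop (nhds νstar) := by
  obtain rfl : F = loadMap J r p g σ2 := funext fun ν => funext (hF ν)
  have hmono := loadMap_monotoneOn hr hp hg hgi hσ
  have hmaps : MapsTo (loadMap J r p g σ2) (Ici 0) (Ici 0) :=
    fun ν hν _ => (loadMap_pos hJ hr hp hg hgi hσ hν).le
  have hνhat0 : νhat ∈ Ici 0 := fun i => (hνhat i).1.le
  obtain ⟨νstar, hνstar0, hfix, hle, hlim⟩ :=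
    hmono.exists_isFixedPt_tendsto_iterate_of_map_le hmaps isClosed_Ici bddBelow_Ici
      (fun ν hν => continuousAt_loadMap hp hg hgi hσ hν) hνhat0 hfeas
  refine ⟨fun t => hmono.antitone_iterate_of_map_le hmaps hνhat0 hfeas t.le_succ,
    νstar, hfix, fun i => ?_, hle, hlim⟩
  rw [← hfix]
  exact loadMap_pos hJ hr hp hg hgi hσ hνstar0
end
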